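/- Let F be algebraically closed of characteristic not 2, and let J = F1 ⊕ Fu ⊕ Fv be the unital commutative Jordan algebra with u² = v² = 1, uv = 0. Consider the two (Z/2)²-gradings on J: Γ¹ with deg u = (1,0), deg v = (1,1), and Γ² with deg u = (0,1), deg v = (1,1), both with identity component F1. Let U = Z/4 × Z/2 with π: U → (Z/2)² the natural projection. Then the loop algebras (L_π(J), Γ with respect to Γ¹) and (L_π(J), Γ with respect to Γ²) are not equivalent as graded algebras, even though (J, Γ¹) and (J, Γ²) are equivalent via the identity map. -/

import Mathlib

/-! Since `Γ²` is `Γ¹` composed with the swap of `(ℤ/2)²`, the two gradings have the same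
components. An equivalence `φ` of the loop algebras maps each component `J_{π g} ⊗ g` onto some
`J_{π g'} ⊗ g'`; the induced map `σ : g ↦ g'` is injective on the support and additive whenever
the product of the components is nonzero. From `1 · 1 = 1` we get `σ 0 = 0`, and from
`u² = v² = 1` we get `σ (2, 0) = 2 σ (1, 0) = 2 σ (3, 0) = 2 σ (1, 1) ≠ 0`. As the `Γ²`-component of
degree `(1, 0)` is zero, each of these three distinct values `t` has `π t ≠ (1, 0)` and `2 t ≠ 0`,
which leaves only `(1, 1)` and `(3, 1)` in `ℤ/4 × ℤ/2`. -/

/-! Generic framework: nonassociative algebras are modules `B` over a field `F`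
equipped with an explicit multiplication `mul : B → B → B`. -/

/-- `mul` is `F`-bilinear. -/
def IsBilinearMul (F : Type*) {B : Type*} [Field F] [AddCommGroup B] [Module F B]
    (mul : B → B → B) : Prop :=
  (∀ x y z : B, mul (x + y) z = mul x z + mul y z) ∧
  (∀ x y z : B, mul x (y + z) = mul x y + mul x z) ∧
  (∀ (c : F) (x y : B), mul (c • x) y = c • mul x y) ∧
  (∀ (c : F) (x y : B), mul x (c • y) = c • mul x y)

/-- The product of the subspaces `U` and `V` is contained in `W`. -/
def SubMulLE {F B : Type*} [Field F] [AddCommGroup B] [Module F B]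
    (mul : B → B → B) (U V W : Submodule F B) : Prop :=
  ∀ u ∈ U, ∀ v ∈ V, mul u v ∈ W

/-- The product of the subspaces `U` and `V` is nonzero. -/
def SubMulNonzero {F B : Type*} [Field F] [AddCommGroup B] [Module F B]
    (mul : B → B → B) (U V : Submodule F B) : Prop :=
  ∃ u ∈ U, ∃ v ∈ V, mul u v ≠ 0

/-- A grading of the subalgebra `S` of `(B, mul)`: a set `Γ` of nonzero subspaces of `S`
whose (direct) sum is `S`, closed under multiplication. -/
structure IsGradingOn {F B : Type*} [Field F] [AddCommGroup B] [Module F B]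
    (mul : B → B → B) (S : Submodule F B) (Γ : Set (Submodule F B)) : Prop where
  ne_bot : ∀ U ∈ Γ, U ≠ ⊥
  le : ∀ U ∈ Γ, U ≤ S
  indep : sSupIndep Γ
  total : sSup Γ = S
  mul_closed : ∀ U ∈ Γ, ∀ V ∈ Γ, ∃ W ∈ Γ, SubMulLE mul U V W

/-- A grading on the whole algebra `(B, mul)`. -/
def IsGrading {F B : Type*} [Field F] [AddCommGroup B] [Module F B]
    (mul : B → B → B) (Γ : Set (Submodule F B)) : Prop :=
  IsGradingOn mul ⊤ Γ

/-- A degree map `δ : Γ → G` compatible with the grading relations: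
`δ U + δ V = δ W` whenever `0 ≠ U·V ⊆ W`. -/
def IsCompatMap {F B : Type*} [Field F] [AddCommGroup B] [Module F B]
    (mul : B → B → B) (Γ : Set (Submodule F B))
    (G : Type*) [AddCommGroup G] (δ : Submodule F B → G) : Prop :=
  ∀ U ∈ Γ, ∀ V ∈ Γ, ∀ W ∈ Γ,
    SubMulNonzero mul U V → SubMulLE mul U V W → δ U + δ V = δ W

/-- `(G, δ)` is the universal group of the grading `Γ`: `δ` is compatible and every compatible
degree map factors through `δ` via a unique group homomorphism. -/
structure IsUniversalGroup {F B : Type*} [Field F] [AddCommGroup B] [Module F B]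
    (mul : B → B → B) (Γ : Set (Submodule F B))
    (G : Type) [AddCommGroup G] (δ : Submodule F B → G) : Prop where
  compat : IsCompatMap mul Γ G δ
  universal : ∀ (H : Type) (instH : AddCommGroup H) (δ' : Submodule F B → H),
    IsCompatMap mul Γ H δ' → ∃! φ : G →+ H, ∀ U ∈ Γ, φ (δ U) = δ' U

/-- `Γ` is a group-grading: it can be realized by an injective compatible degree map into an
abelian group. -/
def IsGroupGrading {F B : Type*} [Field F] [AddCommGroup B] [Module F B]
    (mul : B → B → B) (Γ : Set (Submodule F B)) : Prop :=
  ∃ (G : Type) (instG : AddCommGroup G) (δ : Submodule F B → G),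
    Set.InjOn δ Γ ∧ @IsCompatMap F B _ _ _ mul Γ G instG δ

/-- `Γ''` refines `Γ`: every component of `Γ''` is contained in a component of `Γ`. -/
def GradRefines {F B : Type*} [Field F] [AddCommGroup B] [Module F B]
    (Γ'' Γ : Set (Submodule F B)) : Prop :=
  ∀ U ∈ Γ'', ∃ W ∈ Γ, U ≤ W

/-- `Γ` is a fine grading of `S`: it admits no proper refinement. -/
def IsFineGradingOn {F B : Type*} [Field F] [AddCommGroup B] [Module F B]
    (mul : B → B → B) (S : Submodule F B) (Γ : Set (Submodule F B)) : Prop :=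
  IsGradingOn mul S Γ ∧
    ∀ Γ'' : Set (Submodule F B), IsGradingOn mul S Γ'' → GradRefines Γ'' Γ → Γ'' = Γ

/-- `Γ` is a fine group-grading of `S`: it admits no proper refinement among group-gradings. -/
def IsFineGroupGradingOn {F B : Type*} [Field F] [AddCommGroup B] [Module F B]
    (mul : B → B → B) (S : Submodule F B) (Γ : Set (Submodule F B)) : Prop :=
  IsGradingOn mul S Γ ∧ IsGroupGrading mul Γ ∧
    ∀ Γ'' : Set (Submodule F B), IsGradingOn mul S Γ'' → IsGroupGrading mul Γ'' →
      GradRefines Γ'' Γ → Γ'' = Γ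

/-- `I` is a (two-sided) ideal of the subalgebra `S` of `(B, mul)`. -/
def IsIdealIn {F B : Type*} [Field F] [AddCommGroup B] [Module F B]
    (mul : B → B → B) (S I : Submodule F B) : Prop :=
  I ≤ S ∧ ∀ x ∈ I, ∀ a ∈ S, mul a x ∈ I ∧ mul x a ∈ I

/-- The subalgebra `J` of `(B, mul)` is a simple algebra: its product is nonzero and it has no
proper nonzero ideals. -/
def IsSimpleAlgOn {F B : Type*} [Field F] [AddCommGroup B] [Module F B]
    (mul : B → B → B) (J : Submodule F B) : Prop :=
  (∃ x ∈ J, ∃ y ∈ J, mul x y ≠ 0) ∧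
    ∀ I : Submodule F B, IsIdealIn mul J I → I = ⊥ ∨ I = J

/-- The subalgebra `S` of `(B, mul)` is semisimple: a finite direct sum of simple ideals. -/
def IsSemisimpleOn {F B : Type*} [Field F] [AddCommGroup B] [Module F B]
    (mul : B → B → B) (S : Submodule F B) : Prop :=
  ∃ (n : ℕ) (J : Fin n → Submodule F B), iSupIndep J ∧ (⨆ i, J i) = S ∧
    ∀ i, IsIdealIn mul S (J i) ∧ IsSimpleAlgOn mul (J i)

/-- `I` is a graded submodule with respect to the grading family `𝒜`. -/
def IsGradedSubmoduleFam {F B G : Type*} [Field F] [AddCommGroup B] [Module F B]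
    (𝒜 : G → Submodule F B) (I : Submodule F B) : Prop :=
  I = ⨆ g, I ⊓ 𝒜 g

/-- `I` is a graded submodule with respect to the set-grading `Γ`. -/
def IsGradedSubmoduleSet {F B : Type*} [Field F] [AddCommGroup B] [Module F B]
    (Γ : Set (Submodule F B)) (I : Submodule F B) : Prop :=
  I = ⨆ U ∈ Γ, I ⊓ U

/-- The algebra `(B, mul)` with the `G`-grading `𝒜` is graded-simple: `B·B ≠ 0` and there are
no proper nonzero graded ideals. -/
def IsGradedSimpleFam {F B G : Type*} [Field F] [AddCommGroup B] [Module F B]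
    (mul : B → B → B) (𝒜 : G → Submodule F B) : Prop :=
  (∃ a b : B, mul a b ≠ 0) ∧
    ∀ I : Submodule F B, IsIdealIn mul ⊤ I → IsGradedSubmoduleFam 𝒜 I → I = ⊥ ∨ I = ⊤

/-- The centroid of `(B, mul)`, as a set of `F`-linear endomorphisms. -/
def centroidSet {F B : Type*} [Field F] [AddCommGroup B] [Module F B]
    (mul : B → B → B) : Set (Module.End F B) :=
  {c | ∀ a b : B, c (mul a b) = mul (c a) b ∧ c (mul a b) = mul a (c b)}

/-- The centroid of `(B, mul)`, as a submodule of `End_F(B)` (needs bilinearity of `mul`). -/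
def centroid {F B : Type*} [Field F] [AddCommGroup B] [Module F B]
    (mul : B → B → B) (hbil : IsBilinearMul F mul) : Submodule F (Module.End F B) where
  carrier := centroidSet mul
  add_mem' := by
    rintro c d hc hd
    intro a b
    obtain ⟨hc1, hc2⟩ := hc a b
    obtain ⟨hd1, hd2⟩ := hd a b
    constructor
    · rw [LinearMap.add_apply, hc1, hd1, LinearMap.add_apply, hbil.1]
    · rw [LinearMap.add_apply, hc2, hd2, LinearMap.add_apply, hbil.2.1]
  zero_mem' := by
    intro a b
    have h0 : ∀ y : B, mul 0 y = 0 := fun y => by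
      have := hbil.2.2.1 0 0 y; simpa using this
    have h0' : ∀ y : B, mul y 0 = 0 := fun y => by
      have := hbil.2.2.2 0 y 0; simpa using this
    simp [h0, h0']
  smul_mem' := by
    rintro r c hc a b
    obtain ⟨hc1, hc2⟩ := hc a b
    constructor
    · rw [LinearMap.smul_apply, hc1, LinearMap.smul_apply, hbil.2.2.1]
    · rw [LinearMap.smul_apply, hc2, LinearMap.smul_apply, hbil.2.2.2]

/-- Endomorphisms shifting degrees by `g` with respect to the grading family `𝒜`. -/
def endDegree {F B G : Type*} [Field F] [AddCommGroup B] [Module F B] [AddCommGroup G]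
    (𝒜 : G → Submodule F B) (g : G) : Submodule F (Module.End F B) where
  carrier := {c | ∀ g' : G, ∀ x ∈ 𝒜 g', c x ∈ 𝒜 (g + g')}
  add_mem' := fun hc hd g' x hx => by
    simpa [LinearMap.add_apply] using add_mem (hc g' x hx) (hd g' x hx)
  zero_mem' := fun g' x hx => by simpa using zero_mem _
  smul_mem' := fun r c hc g' x hx => by
    simpa [LinearMap.smul_apply] using Submodule.smul_mem _ r (hc g' x hx)

/-- The homogeneous component of degree `g` of the centroid. -/
def centroidComponent {F B G : Type*} [Field F] [AddCommGroup B] [Module F B] [AddCommGroup G]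
    (mul : B → B → B) (hbil : IsBilinearMul F mul)
    (𝒜 : G → Submodule F B) (g : G) : Submodule F (Module.End F B) :=
  centroid mul hbil ⊓ endDegree 𝒜 g

/-! Loop algebras. We realize the loop algebra inside `G →₀ A` (the `A`-span of the group
algebra `F G`, with `x ⊗ g` corresponding to `Finsupp.single g x`), with the convolution
product. -/

/-- Convolution product on `G →₀ A` induced by `mul`; under `x ⊗ g ↦ single g x` this is the
multiplication of `A ⊗ F[G]`. -/
noncomputable def convMul {A : Type*} {G : Type*} [AddCommGroup A]
    [AddCommGroup G] (mul : A → A → A) (f g : G →₀ A) : G →₀ A :=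
  f.sum fun a x => g.sum fun b y => Finsupp.single (a + b) (mul x y)

/-- The loop algebra `L_π(A) = ⊕_g A_{π(g)} ⊗ g` as a submodule of `G →₀ A`. -/
def loopSubmodule {F A : Type*} {G Gb : Type*} [Field F] [AddCommGroup A] [Module F A]
    [AddCommGroup G] [AddCommGroup Gb] (π : G →+ Gb) (𝒜 : Gb → Submodule F A) :
    Submodule F (G →₀ A) where
  carrier := {f | ∀ g : G, f g ∈ 𝒜 (π g)}
  add_mem' := fun hf hg g => by simpa [Finsupp.add_apply] using add_mem (hf g) (hg g)
  zero_mem' := fun g => by simp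
  smul_mem' := fun r f hf g => by
    simpa [Finsupp.smul_apply] using Submodule.smul_mem _ r (hf g)

/-- The multiplication of the loop algebra. -/
noncomputable def loopMul {F A : Type*} {G Gb : Type*} [Field F] [AddCommGroup A] [Module F A]
    [AddCommGroup G] [AddCommGroup Gb] (mul : A → A → A) (π : G →+ Gb)
    (𝒜 : Gb → Submodule F A)
    (hgmul : ∀ g h : Gb, ∀ x ∈ 𝒜 g, ∀ y ∈ 𝒜 h, mul x y ∈ 𝒜 (g + h))
    (f g : ↥(loopSubmodule π 𝒜)) : ↥(loopSubmodule π 𝒜) :=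
  ⟨convMul mul f.1 g.1, by
    intro k
    classical
    simp only [convMul, Finsupp.sum_apply]
    refine Submodule.finsuppSum_mem _ _ _ _ fun a _ => ?_
    refine Submodule.finsuppSum_mem _ _ _ _ fun b _ => ?_
    simp only [Finsupp.single_apply]
    split_ifs with h
    · have hk : π k = π a + π b := by rw [← h, map_add]
      rw [hk]
      exact hgmul _ _ _ (f.2 a) _ (g.2 b)
    · exact zero_mem _⟩

/-- The homogeneous component of degree `g` of the loop algebra. -/
noncomputable def loopComponent {F A : Type*} {G Gb : Type*} [Field F] [AddCommGroup A] [Module F A]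
    [AddCommGroup G] [AddCommGroup Gb] (π : G →+ Gb) (𝒜 : Gb → Submodule F A) (g : G) :
    Submodule F ↥(loopSubmodule π 𝒜) :=
  Submodule.comap (loopSubmodule π 𝒜).subtype ((𝒜 (π g)).map (Finsupp.lsingle g))

/-- The set of homogeneous components of the `G`-grading of the loop algebra, as submodules of
the ambient `G →₀ A`. -/
def loopGradingSet {F A : Type*} {G Gb : Type*} [Field F] [AddCommGroup A] [Module F A]
    [AddCommGroup G] [AddCommGroup Gb] (π : G →+ Gb) (𝒜 : Gb → Submodule F A) :
    Set (Submodule F (G →₀ A)) :=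
  {S | ∃ g : G, 𝒜 (π g) ≠ ⊥ ∧ S = (𝒜 (π g)).map (Finsupp.lsingle g)}

/-- The set of homogeneous components of the grading family `𝒜`. -/
def famGradingSet {F A Gb : Type*} [Field F] [AddCommGroup A] [Module F A]
    (𝒜 : Gb → Submodule F A) : Set (Submodule F A) :=
  {S | ∃ gb : Gb, 𝒜 gb ≠ ⊥ ∧ S = 𝒜 gb}

/-- The Jordan algebra `J = F1 ⊕ Fu ⊕ Fv` with `u² = v² = 1`, `uv = 0`, realized on
`F × F × F` with `1 = (1,0,0)`, `u = (0,1,0)`, `v = (0,0,1)`. -/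
def mulJor {F : Type*} [Field F] : (F × F × F) → (F × F × F) → (F × F × F) :=
  fun x y => (x.1 * y.1 + x.2.1 * y.2.1 + x.2.2 * y.2.2,
              x.1 * y.2.1 + x.2.1 * y.1,
              x.1 * y.2.2 + x.2.2 * y.1)

/-- The `(ℤ/2)²`-grading `Γ¹` on `J`: `deg u = (1,0)`, `deg v = (1,1)`. -/
noncomputable def grad1 (F : Type*) [Field F] :
    ZMod 2 × ZMod 2 → Submodule F (F × F × F) := fun g =>
  if g = (0, 0) then Submodule.span F {((1 : F), (0 : F), (0 : F))}
  else if g = (1, 0) then Submodule.span F {((0 : F), (1 : F), (0 : F))}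
  else if g = (1, 1) then Submodule.span F {((0 : F), (0 : F), (1 : F))}
  else ⊥

/-- The `(ℤ/2)²`-grading `Γ²` on `J`: `deg u = (0,1)`, `deg v = (1,1)`. -/
noncomputable def grad2 (F : Type*) [Field F] :
    ZMod 2 × ZMod 2 → Submodule F (F × F × F) := fun g =>
  if g = (0, 0) then Submodule.span F {((1 : F), (0 : F), (0 : F))}
  else if g = (0, 1) then Submodule.span F {((0 : F), (1 : F), (0 : F))}
  else if g = (1, 1) then Submodule.span F {((0 : F), (0 : F), (1 : F))}
  else ⊥

/-- The natural projection `π : ℤ/4 × ℤ/2 → ℤ/2 × ℤ/2`. -/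
def projU : (ZMod 4 × ZMod 2) →+ (ZMod 2 × ZMod 2) :=
  AddMonoidHom.prodMap
    ((ZMod.castHom (show (2 : ℕ) ∣ 4 by norm_num) (ZMod 2)).toAddMonoidHom)
    (AddMonoidHom.id (ZMod 2))

section LoopAlgebra

variable {F A G Gb : Type*} [Field F] [AddCommGroup A] [Module F A] [AddCommGroup G]
  [AddCommGroup Gb]

lemma convMul_single_single {mul : A → A → A} (hmul_zero_left : ∀ y, mul 0 y = 0)
    (hmul_zero_right : ∀ x, mul x 0 = 0) (a b : G) (x y : A) :
    convMul mul (Finsupp.single a x) (Finsupp.single b y) = Finsupp.single (a + b) (mul x y) := by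
  unfold convMul
  rw [Finsupp.sum_single_index, Finsupp.sum_single_index]
  · simp [hmul_zero_right]
  · rw [Finsupp.sum_single_index] <;> simp [hmul_zero_left]

variable (π : G →+ Gb) (𝒜 ℬ : Gb → Submodule F A)

lemma single_mem_loopSubmodule {g : G} {x : A} (hx : x ∈ 𝒜 (π g)) :
    Finsupp.single g x ∈ loopSubmodule π 𝒜 := by
  classical
  intro k
  rw [Finsupp.single_apply]
  split_ifs with h
  · exact h ▸ hx
  · exact zero_mem _

lemma mem_loopComponent_iff {g : G} {w : loopSubmodule π 𝒜} :
    w ∈ loopComponent π 𝒜 g ↔ ∃ x ∈ 𝒜 (π g), Finsupp.single g x = (w : G →₀ A) := by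
  simp [loopComponent, Submodule.mem_map, Finsupp.lsingle_apply]

lemma eq_of_loopComponent_eq {g h : G} (hg : 𝒜 (π g) ≠ ⊥)
    (heq : loopComponent π 𝒜 g = loopComponent π 𝒜 h) : g = h := by
  obtain ⟨x, hx, hx0⟩ := (Submodule.ne_bot_iff _).mp hg
  have hw : (⟨Finsupp.single g x, single_mem_loopSubmodule π 𝒜 hx⟩ : loopSubmodule π 𝒜) ∈
      loopComponent π 𝒜 h := heq ▸ (mem_loopComponent_iff π 𝒜).mpr ⟨x, hx, rfl⟩
  obtain ⟨y, -, hxy⟩ := (mem_loopComponent_iff π 𝒜).mp hw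
  rcases (Finsupp.single_eq_single_iff _ _ _ _).mp hxy with ⟨rfl, -⟩ | ⟨-, rfl⟩
  · rfl
  · exact absurd rfl hx0

def IsLoopGradedEquiv (mul : A → A → A) (φ : loopSubmodule π 𝒜 ≃ₗ[F] loopSubmodule π ℬ) :
    Prop :=
  (∀ f g h : loopSubmodule π 𝒜, (h : G →₀ A) = convMul mul (f : G →₀ A) (g : G →₀ A) →
      (φ h : G →₀ A) = convMul mul (φ f : G →₀ A) (φ g : G →₀ A)) ∧
    ∀ g : G, 𝒜 (π g) ≠ ⊥ → ∃ g' : G, ℬ (π g') ≠ ⊥ ∧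
      Submodule.map φ.toLinearMap (loopComponent π 𝒜 g) = loopComponent π ℬ g'

namespace IsLoopGradedEquiv

variable {π 𝒜 ℬ} {mul : A → A → A} {φ : loopSubmodule π 𝒜 ≃ₗ[F] loopSubmodule π ℬ}

lemma exists_degreeMap (hφ : IsLoopGradedEquiv π 𝒜 ℬ mul φ) :
    ∃ σ : G → G, ∀ g, 𝒜 (π g) ≠ ⊥ → ℬ (π (σ g)) ≠ ⊥ ∧
      Submodule.map φ.toLinearMap (loopComponent π 𝒜 g) = loopComponent π ℬ (σ g) := by
  have h : ∀ g, ∃ g', 𝒜 (π g) ≠ ⊥ → ℬ (π g') ≠ ⊥ ∧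
      Submodule.map φ.toLinearMap (loopComponent π 𝒜 g) = loopComponent π ℬ g' := fun g => by
    by_cases hg : 𝒜 (π g) = ⊥
    · exact ⟨g, fun h => absurd hg h⟩
    · obtain ⟨g', hg'⟩ := hφ.2 g hg
      exact ⟨g', fun _ => hg'⟩
  choose σ hσ using h
  exact ⟨σ, hσ⟩

variable {σ : G → G}
  (hσ : ∀ g, 𝒜 (π g) ≠ ⊥ → Submodule.map φ.toLinearMap (loopComponent π 𝒜 g) =
    loopComponent π ℬ (σ g))
include hσ

lemma injOn_degreeMap : Set.InjOn σ {g | 𝒜 (π g) ≠ ⊥} := fun g hg h hh he =>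
  eq_of_loopComponent_eq π 𝒜 hg <| Submodule.map_injective_of_injective φ.injective <| by
    rw [hσ g hg, hσ h hh, he]

lemma degreeMap_add (hφ : IsLoopGradedEquiv π 𝒜 ℬ mul φ) (hmul_zero_left : ∀ y, mul 0 y = 0)
    (hmul_zero_right : ∀ x, mul x 0 = 0) {g h k : G} (hk : g + h = k) {x y : A}
    (hx : x ∈ 𝒜 (π g)) (hy : y ∈ 𝒜 (π h)) (hxy : mul x y ∈ 𝒜 (π k)) (hxy0 : mul x y ≠ 0) :
    σ k = σ g + σ h := by
  subst hk
  have hg : 𝒜 (π g) ≠ ⊥ := (Submodule.ne_bot_iff _).2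
    ⟨x, hx, fun hx0 => hxy0 (hx0 ▸ hmul_zero_left y)⟩
  have hh : 𝒜 (π h) ≠ ⊥ := (Submodule.ne_bot_iff _).2
    ⟨y, hy, fun hy0 => hxy0 (hy0 ▸ hmul_zero_right x)⟩
  have hk' : 𝒜 (π (g + h)) ≠ ⊥ := (Submodule.ne_bot_iff _).2 ⟨_, hxy, hxy0⟩
  let f : loopSubmodule π 𝒜 := ⟨_, single_mem_loopSubmodule π 𝒜 hx⟩
  let f' : loopSubmodule π 𝒜 := ⟨_, single_mem_loopSubmodule π 𝒜 hy⟩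
  let p : loopSubmodule π 𝒜 := ⟨_, single_mem_loopSubmodule π 𝒜 hxy⟩
  have hmap : ∀ {g : G} (hg : 𝒜 (π g) ≠ ⊥) {w : loopSubmodule π 𝒜},
      w ∈ loopComponent π 𝒜 g → ∃ z, Finsupp.single (σ g) z = (φ w : G →₀ A) := by
    intro g hg w hw
    obtain ⟨z, -, hz⟩ := (mem_loopComponent_iff π ℬ).mp
      (hσ _ hg ▸ Submodule.mem_map_of_mem hw)
    exact ⟨z, hz⟩
  obtain ⟨x', hx'⟩ := hmap hg ((mem_loopComponent_iff π 𝒜).mpr ⟨x, hx, rfl⟩ : f ∈ _)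
  obtain ⟨y', hy'⟩ := hmap hh ((mem_loopComponent_iff π 𝒜).mpr ⟨y, hy, rfl⟩ : f' ∈ _)
  obtain ⟨z, hz⟩ := hmap hk' ((mem_loopComponent_iff π 𝒜).mpr ⟨_, hxy, rfl⟩ : p ∈ _)
  have hp : (p : G →₀ A) = convMul mul (f : G →₀ A) (f' : G →₀ A) :=
    (convMul_single_single hmul_zero_left hmul_zero_right g h x y).symm
  have hz0 : z ≠ 0 := by
    rintro rfl
    have hp0 : φ p = 0 := Subtype.ext (by simpa using hz.symm)
    exact hxy0 (Finsupp.single_eq_zero.mp (congrArg Subtype.val (φ.map_eq_zero_iff.mp hp0)))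
  have hsingle : Finsupp.single (σ (g + h)) z = Finsupp.single (σ g + σ h) (mul x' y') := by
    rw [hz, hφ.1 f f' p hp, ← hx', ← hy', convMul_single_single hmul_zero_left hmul_zero_right]
  rcases (Finsupp.single_eq_single_iff _ _ _ _).mp hsingle with ⟨he, -⟩ | ⟨hz0', -⟩
  · exact he
  · exact absurd hz0' hz0

end IsLoopGradedEquiv

end LoopAlgebra

lemma famGradingSet_comp_of_surjective {F A G Gb : Type*} [Field F] [AddCommGroup A]
    [Module F A] (𝒜 : Gb → Submodule F A) {e : G → Gb} (he : Function.Surjective e) :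
    famGradingSet (𝒜 ∘ e) = famGradingSet 𝒜 := by
  ext S
  constructor
  · rintro ⟨g, hg, rfl⟩
    exact ⟨e g, hg, rfl⟩
  · rintro ⟨gb, hgb, rfl⟩
    obtain ⟨g, rfl⟩ := he gb
    exact ⟨g, hgb, rfl⟩

lemma grad2_eq_grad1_comp_swap (F : Type*) [Field F] : grad2 F = grad1 F ∘ Prod.swap := by
  funext g
  fin_cases g <;> simp +decide [grad1, grad2]

lemma famGradingSet_grad1_eq_grad2 (F : Type*) [Field F] :
    famGradingSet (grad1 F) = famGradingSet (grad2 F) := by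
  rw [grad2_eq_grad1_comp_swap, famGradingSet_comp_of_surjective _ Prod.swap_surjective]

section JordanAlgebra

variable {F : Type*} [Field F]

lemma mulJor_zero_left (y : F × F × F) : mulJor 0 y = 0 := by
  simp [mulJor, Prod.ext_iff]

lemma mulJor_zero_right (x : F × F × F) : mulJor x 0 = 0 := by
  simp [mulJor, Prod.ext_iff]

lemma one_mem_grad1_projU {g : ZMod 4 × ZMod 2} (hg : projU g = (0, 0)) :
    ((1 : F), (0 : F), (0 : F)) ∈ grad1 F (projU g) := by
  simp [hg, grad1, Submodule.mem_span_singleton_self]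

lemma u_mem_grad1_projU {g : ZMod 4 × ZMod 2} (hg : projU g = (1, 0)) :
    ((0 : F), (1 : F), (0 : F)) ∈ grad1 F (projU g) := by
  simp [hg, grad1, Submodule.mem_span_singleton_self]

lemma v_mem_grad1_projU {g : ZMod 4 × ZMod 2} (hg : projU g = (1, 1)) :
    ((0 : F), (0 : F), (1 : F)) ∈ grad1 F (projU g) := by
  simp +decide [hg, grad1, Submodule.mem_span_singleton_self]

lemma ne_one_zero_of_grad2_ne_bot {g : ZMod 2 × ZMod 2} : grad2 F g ≠ ⊥ → g ≠ (1, 0) := by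
  rintro hg rfl
  exact hg (by simp +decide [grad2])

lemma eq_one_one_or_eq_three_one {t : ZMod 4 × ZMod 2} (hp : projU t ≠ (1, 0))
    (ht : t + t ≠ 0) : t = (1, 1) ∨ t = (3, 1) := by
  revert t
  decide

lemma not_injOn_of_add_self_eq {S : Set (ZMod 4 × ZMod 2)} {σ : ZMod 4 × ZMod 2 → ZMod 4 × ZMod 2}
    (hS : ({0, (2, 0), (1, 0), (3, 0), (1, 1)} : Set _) ⊆ S)
    (hσ : ∀ g ∈ S, projU (σ g) ≠ (1, 0)) (h0 : σ 0 = σ 0 + σ 0)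
    (h10 : σ (2, 0) = σ (1, 0) + σ (1, 0)) (h30 : σ (2, 0) = σ (3, 0) + σ (3, 0))
    (h11 : σ (2, 0) = σ (1, 1) + σ (1, 1)) : ¬ S.InjOn σ := by
  intro hinj
  have hmem {g} (hg : g ∈ ({0, (2, 0), (1, 0), (3, 0), (1, 1)} : Set _)) : g ∈ S := hS hg
  have h2 : σ (2, 0) ≠ 0 := fun h => absurd
    (hinj (hmem (by simp)) (hmem (by simp)) (h.trans (left_eq_add.mp h0).symm)) (by decide)
  have hodd {g} (hg : g ∈ S) (h : σ (2, 0) = σ g + σ g) :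
      σ g ∈ ({(1, 1), (3, 1)} : Finset (ZMod 4 × ZMod 2)) := by
    simpa using eq_one_one_or_eq_three_one (hσ g hg) (h ▸ h2)
  let s : Finset (ZMod 4 × ZMod 2) := {(1, 0), (3, 0), (1, 1)}
  have hs : ∀ g ∈ s, g ∈ S ∧ σ g ∈ ({(1, 1), (3, 1)} : Finset _) := by
    intro g hg
    simp only [s, Finset.mem_insert, Finset.mem_singleton] at hg
    have hgS : g ∈ S := hmem (by simp [hg])
    rcases hg with rfl | rfl | rfl
    exacts [⟨hgS, hodd hgS h10⟩, ⟨hgS, hodd hgS h30⟩, ⟨hgS, hodd hgS h11⟩]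
  have hcard := Finset.card_le_card_of_injOn σ (fun g hg => (hs g hg).2)
    (hinj.mono fun g hg => (hs g hg).1)
  exact absurd hcard (by decide)

theorem not_isLoopGradedEquiv_grad1_grad2
    (φ : loopSubmodule projU (grad1 F) ≃ₗ[F] loopSubmodule projU (grad2 F)) :
    ¬ IsLoopGradedEquiv projU (grad1 F) (grad2 F) mulJor φ := by
  intro hφ
  obtain ⟨σ, hσ⟩ := hφ.exists_degreeMap
  have hmap g hg := (hσ g hg).2
  have hone_ne_zero : ((1 : F), (0 : F), (0 : F)) ≠ 0 := by simp [Prod.ext_iff]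
  have hsq {g k : ZMod 4 × ZMod 2} {x : F × F × F} (hk : g + g = k) (hk0 : projU k = (0, 0))
      (hx : x ∈ grad1 F (projU g)) (hxx : mulJor x x = (1, 0, 0)) : σ k = σ g + σ g :=
    hφ.degreeMap_add hmap mulJor_zero_left mulJor_zero_right hk hx hx
      (hxx ▸ one_mem_grad1_projU hk0) (hxx ▸ hone_ne_zero)
  have hsupp {g : ZMod 4 × ZMod 2} {x : F × F × F} (hx : x ∈ grad1 F (projU g)) (hx0 : x ≠ 0) :
      g ∈ {g | grad1 F (projU g) ≠ ⊥} := (Submodule.ne_bot_iff _).2 ⟨x, hx, hx0⟩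
  refine not_injOn_of_add_self_eq (S := {g | grad1 F (projU g) ≠ ⊥}) ?_
    (fun g hg => ne_one_zero_of_grad2_ne_bot (hσ g hg).1)
    (hsq (add_zero 0) rfl (one_mem_grad1_projU rfl) (by simp [mulJor]))
    (hsq (by decide) rfl (u_mem_grad1_projU rfl) (by simp [mulJor]))
    (hsq (by decide) rfl (u_mem_grad1_projU rfl) (by simp [mulJor]))
    (hsq (by decide) rfl (v_mem_grad1_projU rfl) (by simp [mulJor]))
    (IsLoopGradedEquiv.injOn_degreeMap hmap)
  simp only [Set.insert_subset_iff, Set.singleton_subset_iff]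
  exact ⟨hsupp (one_mem_grad1_projU rfl) hone_ne_zero, hsupp (one_mem_grad1_projU rfl) hone_ne_zero,
    hsupp (u_mem_grad1_projU rfl) (by simp [Prod.ext_iff]),
    hsupp (u_mem_grad1_projU rfl) (by simp [Prod.ext_iff]),
    hsupp (v_mem_grad1_projU rfl) (by simp [Prod.ext_iff])⟩

end JordanAlgebra

theorem stmt_19_general {F : Type*} [Field F] :
    -- the identity map is an equivalence `(J, Γ¹) → (J, Γ²)`:
    famGradingSet (grad1 F) = famGradingSet (grad2 F) ∧
    -- but the loop algebras are not equivalent as graded algebras: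
    ¬ ∃ φ : ↥(loopSubmodule projU (grad1 F)) ≃ₗ[F] ↥(loopSubmodule projU (grad2 F)),
      (∀ f g h : ↥(loopSubmodule projU (grad1 F)),
        (h : (ZMod 4 × ZMod 2) →₀ (F × F × F)) =
          convMul mulJor (f : (ZMod 4 × ZMod 2) →₀ (F × F × F))
            (g : (ZMod 4 × ZMod 2) →₀ (F × F × F)) →
        (φ h : (ZMod 4 × ZMod 2) →₀ (F × F × F)) =
          convMul mulJor (φ f : (ZMod 4 × ZMod 2) →₀ (F × F × F))
            (φ g : (ZMod 4 × ZMod 2) →₀ (F × F × F))) ∧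
      (∀ g : ZMod 4 × ZMod 2, grad1 F (projU g) ≠ ⊥ →
        ∃ g' : ZMod 4 × ZMod 2, grad2 F (projU g') ≠ ⊥ ∧
          Submodule.map φ.toLinearMap (loopComponent projU (grad1 F) g) =
            loopComponent projU (grad2 F) g') :=
  ⟨famGradingSet_grad1_eq_grad2 F, fun ⟨φ, hφ⟩ => not_isLoopGradedEquiv_grad1_grad2 φ hφ⟩

/-- the two gradings `Γ¹, Γ²` on `J` are equivalent (indeed they have the same
set of homogeneous components, so the identity is an equivalence), but the associated loop
algebras `L_π(J)` with respect to `π : ℤ/4 × ℤ/2 → (ℤ/2)²` are not equivalent as graded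
algebras. -/
theorem stmt_19 {F : Type*} [Field F] [IsAlgClosed F] (hchar : (2 : F) ≠ 0) :
    -- the identity map is an equivalence `(J, Γ¹) → (J, Γ²)`:
    famGradingSet (grad1 F) = famGradingSet (grad2 F) ∧
    -- but the loop algebras are not equivalent as graded algebras:
    ¬ ∃ φ : ↥(loopSubmodule projU (grad1 F)) ≃ₗ[F] ↥(loopSubmodule projU (grad2 F)),
      (∀ f g h : ↥(loopSubmodule projU (grad1 F)),
        (h : (ZMod 4 × ZMod 2) →₀ (F × F × F)) =
          convMul mulJor (f : (ZMod 4 × ZMod 2) →₀ (F × F × F))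
            (g : (ZMod 4 × ZMod 2) →₀ (F × F × F)) →
        (φ h : (ZMod 4 × ZMod 2) →₀ (F × F × F)) =
          convMul mulJor (φ f : (ZMod 4 × ZMod 2) →₀ (F × F × F))
            (φ g : (ZMod 4 × ZMod 2) →₀ (F × F × F))) ∧
      (∀ g : ZMod 4 × ZMod 2, grad1 F (projU g) ≠ ⊥ →
        ∃ g' : ZMod 4 × ZMod 2, grad2 F (projU g') ≠ ⊥ ∧
          Submodule.map φ.toLinearMap (loopComponent projU (grad1 F) g) =
            loopComponent projU (grad2 F) g') :=
  stmt_19_general
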